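/- arXiv:2402.07703 — 2 statements merged into one kernel-verified Lean document; each statement's English description precedes it below -/
import Mathlib

section
/- (Theorem 5) Under the SDMD-GC scheme with approximation error ρ_{t,i_k} = η³/(2σ), for every x* ∈ X the regret satisfies Reg_T := Σ_{t=1}^T f_t(x_t) − Σ_{t=1}^T f_t(x*) ≤ η(G⋆²T + 8ξRG⋆T + 2ηG⋆T + 4G⋆²D_T + 8ηG⋆D_T)/(2σ) + 2η²ξG⋆²D_T/σ² + B_ψ(x*; x₁)/η, where D_T := Σ_{t=1}^T d_t. -/
/-!
Each use of a delayed gradient `g = ∇f_k(x_k)` is an inexact mirror step from some `w` to `y`.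
Its exact minimizer `p` satisfies the three-point inequality
`η g (p - u) ≤ B(u, w) - B(u, p) - B(p, w)`; the approximation error `η³/(2σ)` keeps `y` within
`η²/σ` of `p` by strong convexity, and the Lipschitz bound on `∇ψ` trades `B(u, p)` for `B(u, y)`
at cost `2RξGη²/σ`. Summed over all steps the Bregman terms telescope along the trajectory to
`B(u, x₁)`. The staleness costs `ηG ‖x_k - y‖`; every step moves the iterate by at most
`(ηG + η²)/σ`, and the number of steps from playing `x_k` to using its gradient, summed over `k`,
is at most `2 Σ d_k`. Convexity of the `f_k` bounds the regret by the linearized regret.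
-/

open Finset

theorem ContinuousLinearMap.apply_le_of_opNorm_le {E : Type*} [NormedAddCommGroup E]
    [NormedSpace ℝ E] (L : E →L[ℝ] ℝ) {C : ℝ} (hL : ‖L‖ ≤ C) (v : E) : L v ≤ C * ‖v‖ :=
  (le_abs_self _).trans (L.le_of_opNorm_le hL v)

section Calculus

variable {E : Type*} [NormedAddCommGroup E] [NormedSpace ℝ E]
  {X : Set E} {Φ : E → ℝ} {L : E →L[ℝ] ℝ} {p u : E}

theorem IsMinOn.apply_sub_nonneg_of_hasFDerivAt (hmin : IsMinOn Φ X p) (hX : Convex ℝ X)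
    (hp : p ∈ X) (hu : u ∈ X) (hL : HasFDerivAt Φ L p) : 0 ≤ L (u - p) :=
  hmin.localize.hasFDerivWithinAt_nonneg hL.hasFDerivWithinAt
    (sub_mem_posTangentConeAt_of_segment_subset (hX.segment_subset hp hu))

/-- Apply the previous lemma to `θ ↦ θ (Φ u - Φ p) - Φ (p + θ (u - p))`, which convexity
minimizes on `[0, 1]` at `0`. -/
theorem ConvexOn.sub_le_apply_sub_of_hasFDerivAt (hΦ : ConvexOn ℝ X Φ) (hp : p ∈ X)
    (hu : u ∈ X) (hL : HasFDerivAt Φ L p) : Φ p - Φ u ≤ L (p - u) := by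
  set c := Φ u - Φ p with hc
  have hmin : IsMinOn (fun θ : ℝ => θ * c - Φ (p + θ • (u - p))) (Set.Icc 0 1) 0 := by
    rintro θ ⟨h0, h1⟩
    have hcomb : p + θ • (u - p) = (1 - θ) • p + θ • u := by module
    have := hΦ.2 hp hu (sub_nonneg.2 h1) h0 (sub_add_cancel 1 θ)
    show 0 * c - Φ (p + (0 : ℝ) • (u - p)) ≤ θ * c - Φ (p + θ • (u - p))
    rw [hcomb, zero_mul, zero_smul, add_zero, hc]
    simp only [smul_eq_mul] at this
    linarith
  have hline : HasDerivAt (fun θ : ℝ => p + θ • (u - p)) (u - p) 0 := by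
    simpa using ((hasDerivAt_id (0 : ℝ)).smul_const (u - p)).const_add p
  have hL' : HasFDerivAt Φ L (p + (0 : ℝ) • (u - p)) := by simpa using hL
  have hderiv := (hasDerivAt_mul_const c).sub (hL'.comp_hasDerivAt 0 hline)
  have := hmin.apply_sub_nonneg_of_hasFDerivAt (convex_Icc 0 1) (by simp) (u := 1) (by simp)
    hderiv.hasFDerivAt
  have hneg : L (p - u) = -L (u - p) := by rw [← map_neg, neg_sub]
  simp only [sub_zero, ContinuousLinearMap.toSpanSingleton_apply, one_smul] at this
  linarith

end Calculus

section MirrorStep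

variable {E : Type*} [NormedAddCommGroup E] [NormedSpace ℝ E]

noncomputable def bregman (ψ : E → ℝ) (a b : E) : ℝ := ψ a - ψ b - fderiv ℝ ψ b (a - b)

theorem bregman_sub_bregman_sub_bregman (ψ : E → ℝ) (a b c : E) :
    bregman ψ a b - bregman ψ a c - bregman ψ c b = (fderiv ℝ ψ c - fderiv ℝ ψ b) (a - c) := by
  simp only [bregman, sub_apply, map_sub]
  ring

theorem bregman_add_bregman_comm (ψ : E → ℝ) (a b : E) :
    bregman ψ a b + bregman ψ b a = (fderiv ℝ ψ a - fderiv ℝ ψ b) (a - b) := by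
  simp only [bregman, sub_apply, map_sub]
  ring

theorem hasFDerivAt_bregman_left {ψ : E → ℝ} {p : E} (hψ : DifferentiableAt ℝ ψ p) (w : E) :
    HasFDerivAt (bregman ψ · w) (fderiv ℝ ψ p - fderiv ℝ ψ w) p := by
  have hlin : HasFDerivAt (fun z => fderiv ℝ ψ w (z - w)) (fderiv ℝ ψ w) p := by
    simpa only [map_sub] using (fderiv ℝ ψ w).hasFDerivAt.sub_const (fderiv ℝ ψ w w)
  exact (hψ.hasFDerivAt.sub_const (ψ w)).sub hlin

/-- The paper's `C_{t,i}`, with `g = ∇f_k(x_k)` and `w = x_{t,i}`. -/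
noncomputable def mirrorObjective (ψ : E → ℝ) (η : ℝ) (g : E →L[ℝ] ℝ) (w z : E) : ℝ :=
  g z + bregman ψ z w / η

variable {X : Set E} {ψ : E → ℝ} {σ η : ℝ} {g : E →L[ℝ] ℝ} {w p y u : E}

theorem IsMinOn.mirrorObjective_variational_ineq (hmin : IsMinOn (mirrorObjective ψ η g w) X p)
    (hX : Convex ℝ X) (hp : p ∈ X) (hψ : DifferentiableAt ℝ ψ p) (hη : 0 < η) (hu : u ∈ X) :
    0 ≤ η * g (u - p) + (fderiv ℝ ψ p - fderiv ℝ ψ w) (u - p) := by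
  have hderiv : HasFDerivAt (mirrorObjective ψ η g w)
      (g + η⁻¹ • (fderiv ℝ ψ p - fderiv ℝ ψ w)) p := by
    have hfun : mirrorObjective ψ η g w = fun z => g z + bregman ψ z w * η⁻¹ := by
      funext z
      rw [mirrorObjective, div_eq_mul_inv]
    rw [hfun]
    exact g.hasFDerivAt.add ((hasFDerivAt_bregman_left hψ w).mul_const η⁻¹)
  have := mul_nonneg hη.le (hmin.apply_sub_nonneg_of_hasFDerivAt hX hp hu hderiv)
  simpa only [add_apply, smul_apply, smul_eq_mul,
    mul_add, mul_inv_cancel_left₀ hη.ne'] using this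

theorem IsMinOn.mul_apply_sub_le_of_mirrorObjective
    (hmin : IsMinOn (mirrorObjective ψ η g w) X p) (hX : Convex ℝ X) (hp : p ∈ X)
    (hψ : DifferentiableAt ℝ ψ p) (hη : 0 < η) (hu : u ∈ X) :
    η * g (p - u) ≤ bregman ψ u w - bregman ψ u p - bregman ψ p w := by
  have := hmin.mirrorObjective_variational_ineq hX hp hψ hη hu
  rw [bregman_sub_bregman_sub_bregman, ← neg_sub u p, map_neg]
  linarith

theorem IsMinOn.bregman_le_mul_mirrorObjective_sub
    (hmin : IsMinOn (mirrorObjective ψ η g w) X p) (hX : Convex ℝ X) (hp : p ∈ X)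
    (hψ : DifferentiableAt ℝ ψ p) (hη : 0 < η) (hy : y ∈ X) :
    bregman ψ y p ≤ η * (mirrorObjective ψ η g w y - mirrorObjective ψ η g w p) := by
  have := hmin.mirrorObjective_variational_ineq hX hp hψ hη hy
  have hsplit : η * (mirrorObjective ψ η g w y - mirrorObjective ψ η g w p)
      = η * g (y - p) + (bregman ψ y w - bregman ψ p w) := by
    simp only [mirrorObjective, map_sub]
    field_simp
    ring
  rw [hsplit, ← bregman_sub_bregman_sub_bregman ψ y w p] at *
  linarith

variable (hsc : ∀ a ∈ X, ∀ b ∈ X, σ / 2 * ‖a - b‖ ^ 2 ≤ bregman ψ a b)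
include hsc

theorem bregman_nonneg (hσ : 0 ≤ σ) {a b : E} (ha : a ∈ X) (hb : b ∈ X) : 0 ≤ bregman ψ a b :=
  (by positivity : 0 ≤ σ / 2 * ‖a - b‖ ^ 2).trans (hsc a ha b hb)

theorem IsMinOn.norm_sub_le_of_mirrorObjective
    (hmin : IsMinOn (mirrorObjective ψ η g w) X p) (hX : Convex ℝ X) (hp : p ∈ X) (hw : w ∈ X)
    (hψ : DifferentiableAt ℝ ψ p) (hη : 0 < η) (hσ : 0 < σ) :
    ‖w - p‖ ≤ η * ‖g‖ / σ := by
  have hvi := hmin.mirrorObjective_variational_ineq hX hp hψ hη hw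
  have hsum := bregman_add_bregman_comm ψ p w
  rw [← neg_sub w p, map_neg] at hsum
  have hsc₁ := hsc p hp w hw
  have hsc₂ := hsc w hw p hp
  rw [norm_sub_rev] at hsc₁
  have hg := g.apply_le_of_opNorm_le le_rfl (w - p)
  rw [le_div_iff₀ hσ]
  rcases (norm_nonneg (w - p)).eq_or_lt with h0 | h0
  · rw [← h0, zero_mul]; positivity
  · refine le_of_mul_le_mul_right ?_ h0
    nlinarith

end MirrorStep

section InexactStep

variable {E : Type*} [NormedAddCommGroup E] [NormedSpace ℝ E]

def IsApproxMirrorStep (X : Set E) (ψ : E → ℝ) (η : ℝ) (g : E →L[ℝ] ℝ) (w y : E) (ε : ℝ) :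
    Prop :=
  ∃ p ∈ X, IsMinOn (mirrorObjective ψ η g w) X p ∧
    mirrorObjective ψ η g w y ≤ mirrorObjective ψ η g w p + ε

variable {X : Set E} {ψ : E → ℝ} {σ η ξ G R : ℝ} {g : E →L[ℝ] ℝ} {w p y u x₀ : E}
  (hX : Convex ℝ X) (hψ : Differentiable ℝ ψ) (hσ : 0 < σ) (hη : 0 < η)
  (hsc : ∀ a ∈ X, ∀ b ∈ X, σ / 2 * ‖a - b‖ ^ 2 ≤ bregman ψ a b)
include hX hψ hσ hη hsc

theorem IsMinOn.norm_sub_le_of_mirrorObjective_le_add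
    (hmin : IsMinOn (mirrorObjective ψ η g w) X p) (hp : p ∈ X) (hy : y ∈ X)
    (happrox : mirrorObjective ψ η g w y ≤ mirrorObjective ψ η g w p + η ^ 3 / (2 * σ)) :
    ‖y - p‖ ≤ η ^ 2 / σ := by
  have hbreg := hmin.bregman_le_mul_mirrorObjective_sub hX hp (hψ p) hη hy
  have hsq : ‖y - p‖ ^ 2 ≤ (η ^ 2 / σ) ^ 2 := by
    have key := (hsc y hy p hp).trans
      (hbreg.trans (mul_le_mul_of_nonneg_left (sub_le_iff_le_add'.2 happrox) hη.le))
    have h : η * (η ^ 3 / (2 * σ)) * (2 * σ) = η ^ 4 := by field_simp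
    rw [div_pow, le_div_iff₀ (by positivity)]
    nlinarith [mul_le_mul_of_nonneg_right key (by positivity : 0 ≤ 2 * σ)]
  exact (pow_le_pow_iff_left₀ (norm_nonneg _) (by positivity) two_ne_zero).1 hsq

theorem IsApproxMirrorStep.norm_sub_le_of_norm_le
    (hstep : IsApproxMirrorStep X ψ η g w y (η ^ 3 / (2 * σ))) (hw : w ∈ X) (hy : y ∈ X) (hg : ‖g‖ ≤ G) :
    ‖y - w‖ ≤ (η * G + η ^ 2) / σ := by
  obtain ⟨p, hp, hmin, happrox⟩ := hstep
  have hwp := hmin.norm_sub_le_of_mirrorObjective hsc hX hp hw (hψ p) hη hσ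
  have hyp := hmin.norm_sub_le_of_mirrorObjective_le_add hX hψ hσ hη hsc hp hy happrox
  calc ‖y - w‖ ≤ ‖y - p‖ + ‖w - p‖ := norm_sub_rev w p ▸ norm_sub_le_norm_sub_add_norm_sub ..
    _ ≤ η ^ 2 / σ + η * G / σ := by gcongr; exact hwp.trans (by gcongr)
    _ = (η * G + η ^ 2) / σ := by ring

theorem IsApproxMirrorStep.mul_apply_sub_le
    (hstep : IsApproxMirrorStep X ψ η g w y (η ^ 3 / (2 * σ)))
    (hw : w ∈ X) (hy : y ∈ X) (hu : u ∈ X) (hg : ‖g‖ ≤ G) (hξ : 0 ≤ ξ)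
    (hR : ∀ z ∈ X, ‖z‖ ≤ R)
    (hlip : ∀ a ∈ X, ∀ b ∈ X, ‖fderiv ℝ ψ a - fderiv ℝ ψ b‖ ≤ ξ * G * ‖a - b‖) :
    η * g (x₀ - u) ≤ bregman ψ u w - bregman ψ u y + η * G * ‖x₀ - y‖
      + (η ^ 3 * G / σ + 2 * R * ξ * G * η ^ 2 / σ) := by
  obtain ⟨p, hp, hmin, happrox⟩ := hstep
  have hG : 0 ≤ G := (norm_nonneg g).trans hg
  have hyp := hmin.norm_sub_le_of_mirrorObjective_le_add hX hψ hσ hη hsc hp hy happrox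
  have hmirror := hmin.mul_apply_sub_le_of_mirrorObjective hX hp (hψ p) hη hu
  have hBpw := bregman_nonneg hsc hσ.le hp hw
  have hByp := bregman_nonneg hsc hσ.le hy hp
  -- replacing the exact minimizer `p` by `y` costs `(∇ψ y - ∇ψ p) (u - y)`
  have hthree := bregman_sub_bregman_sub_bregman ψ u p y
  have hlipterm : -(fderiv ℝ ψ y - fderiv ℝ ψ p) (u - y) ≤ ξ * G * (η ^ 2 / σ) * (2 * R) := by
    have hnorm : ‖u - y‖ ≤ 2 * R := by linarith [norm_sub_le u y, hR u hu, hR y hy]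
    calc -(fderiv ℝ ψ y - fderiv ℝ ψ p) (u - y)
        ≤ ‖fderiv ℝ ψ y - fderiv ℝ ψ p‖ * ‖u - y‖ :=
          (neg_le_abs _).trans ((fderiv ℝ ψ y - fderiv ℝ ψ p).le_opNorm _)
      _ ≤ ξ * G * (η ^ 2 / σ) * (2 * R) := by
        refine mul_le_mul ((hlip y hy p hp).trans ?_) hnorm (norm_nonneg _) (by positivity)
        exact mul_le_mul_of_nonneg_left hyp (mul_nonneg hξ hG)
  have hg₁ := g.apply_le_of_opNorm_le hg (x₀ - y)
  have hg₂ : g (y - p) ≤ G * (η ^ 2 / σ) := (g.apply_le_of_opNorm_le hg _).trans (by gcongr)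
  have hsplit : g (x₀ - u) = g (x₀ - y) + g (y - p) + g (p - u) := by
    simp only [map_sub]; ring
  rw [hsplit]
  have := mul_le_mul_of_nonneg_left hg₁ hη.le
  have := mul_le_mul_of_nonneg_left hg₂ hη.le
  have : η * (G * (η ^ 2 / σ)) = η ^ 3 * G / σ := by ring
  have : ξ * G * (η ^ 2 / σ) * (2 * R) = 2 * R * ξ * G * η ^ 2 / σ := by ring
  linarith

end InexactStep

section Rank

variable {α : Type*} [LinearOrder α] {s : Finset α} {k : α}

/-- `rankIn (F t) k` is the paper's `i_k = |F_{t,k}|`. -/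
def rankIn (s : Finset α) (k : α) : ℕ := #(s.filter (· < k))

theorem rankIn_lt_card (hk : k ∈ s) : rankIn s k < #s :=
  card_lt_card (filter_ssubset.2 ⟨k, hk, lt_irrefl k⟩)

theorem rankIn_strictMonoOn : StrictMonoOn (rankIn s) s := by
  intro a ha b _ hab
  refine card_lt_card ⟨monotone_filter_right s fun _ _ h => h.trans hab, fun hsub => ?_⟩
  exact lt_irrefl a (mem_filter.1 (hsub (mem_filter.2 ⟨ha, hab⟩))).2

theorem image_rankIn : s.image (rankIn s) = range #s :=
  eq_of_subset_of_card_le (image_subset_iff.2 fun _ hk => mem_range.2 (rankIn_lt_card hk))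
    (by rw [card_image_of_injOn rankIn_strictMonoOn.injOn, card_range])

theorem sum_rankIn {M : Type*} [AddCommMonoid M] (f : ℕ → M) :
    ∑ k ∈ s, f (rankIn s k) = ∑ i ∈ range #s, f i := by
  rw [← image_rankIn, sum_image rankIn_strictMonoOn.injOn]

theorem forall_lt_card_iff_forall_rankIn {P : ℕ → Prop} :
    (∀ i < #s, P i) ↔ ∀ k ∈ s, P (rankIn s k) := by
  simp only [← mem_range, ← image_rankIn, forall_mem_image]

end Rank

section Delays

variable {T : ℕ} {d : ℕ → ℕ} {k : ℕ}

def feedbackSet (T : ℕ) (d : ℕ → ℕ) (t : ℕ) : Finset ℕ :=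
  (Icc 1 T).filter (fun k => k + d k - 1 = t)

theorem mem_feedbackSet_self (hk : k ∈ Icc 1 T) : k ∈ feedbackSet T d (k + d k - 1) :=
  mem_filter.2 ⟨hk, rfl⟩

/-- The number of mirror steps from the start of round `k` up to and including the step that
uses the gradient at `x k`, steps within a round being taken in increasing order of `k`. -/
def delayCount (T : ℕ) (d : ℕ → ℕ) (k : ℕ) : ℕ :=
  ∑ s ∈ Ico k (k + d k - 1), #(feedbackSet T d s) + (rankIn (feedbackSet T d (k + d k - 1)) k + 1)

variable (hd : ∀ t ∈ Icc 1 T, 1 ≤ d t ∧ t + d t - 1 ≤ T)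
include hd

/-- The steps counted by `delayCount T d k` use gradients of rounds `k'` that were either still
pending at round `k` or played strictly between round `k` and its feedback. -/
theorem delayCount_le (hk : k ∈ Icc 1 T) :
    delayCount T d k ≤ #{k' ∈ Icc 1 T | k' ≤ k ∧ k ≤ k' + d k' - 1} + (d k - 1) := by
  set earlier := {k' ∈ Icc 1 T | k ≤ k' + d k' - 1 ∧ k' + d k' - 1 < k + d k - 1}
  set same := {k' ∈ Icc 1 T | k' ≤ k ∧ k' + d k' - 1 = k + d k - 1}
  set pending := {k' ∈ Icc 1 T | k' ≤ k ∧ k ≤ k' + d k' - 1}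
  have hearlier : ∑ s ∈ Ico k (k + d k - 1), #(feedbackSet T d s) = #earlier := by
    simpa only [feedbackSet, mem_Ico] using
      sum_card_fiberwise_eq_card_filter (Icc 1 T) (Ico k (k + d k - 1)) (fun k' => k' + d k' - 1)
  have hsame : rankIn (feedbackSet T d (k + d k - 1)) k + 1 ≤ #same := by
    rw [rankIn, ← card_insert_of_notMem (s := (feedbackSet T d (k + d k - 1)).filter (· < k))
      (a := k) (by simp)]
    refine card_le_card fun a ha => ?_
    simp only [feedbackSet, same, mem_insert, mem_filter] at ha ⊢
    rcases ha with rfl | ⟨⟨ha, hta⟩, hak⟩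
    · exact ⟨hk, le_rfl, rfl⟩
    · exact ⟨ha, hak.le, hta⟩
  have hdisj : Disjoint earlier same := disjoint_filter.2 fun _ _ h h' => h.2.ne h'.2
  have hcover : earlier ∪ same ⊆ pending ∪ Ioo k (k + d k - 1) := by
    intro k' hk'
    have hk'T : k' ∈ Icc 1 T := by rcases mem_union.1 hk' with h | h <;> exact (mem_filter.1 h).1
    have := hd k hk
    have := hd k' hk'T
    simp only [earlier, same, pending, mem_union, mem_filter, mem_Icc, mem_Ioo] at hk' ⊢
    omega
  have hcard := (card_le_card hcover).trans (card_union_le _ _)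
  rw [card_union_of_disjoint hdisj, Nat.card_Ioo] at hcard
  unfold delayCount
  omega

theorem sum_card_pending_le :
    ∑ k ∈ Icc 1 T, #{k' ∈ Icc 1 T | k' ≤ k ∧ k ≤ k' + d k' - 1} ≤ ∑ k ∈ Icc 1 T, d k := by
  simp only [card_filter]
  rw [sum_comm]
  refine sum_le_sum fun k' hk' => ?_
  rw [← card_filter]
  calc #{k ∈ Icc 1 T | k' ≤ k ∧ k ≤ k' + d k' - 1}
      ≤ #(Icc k' (k' + d k' - 1)) := card_le_card fun k hk => by simp_all
    _ = d k' := by rw [Nat.card_Icc]; have := hd k' hk'; omega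

theorem sum_delayCount_le : ∑ k ∈ Icc 1 T, delayCount T d k ≤ 2 * ∑ k ∈ Icc 1 T, d k :=
  calc ∑ k ∈ Icc 1 T, delayCount T d k
      ≤ ∑ k ∈ Icc 1 T, (#{k' ∈ Icc 1 T | k' ≤ k ∧ k ≤ k' + d k' - 1} + d k) :=
        sum_le_sum fun k hk => (delayCount_le hd hk).trans (by omega)
    _ ≤ 2 * ∑ k ∈ Icc 1 T, d k := by
        rw [sum_add_distrib]; linarith [sum_card_pending_le hd]

end Delays

section DelayedTrajectory

variable {E : Type*} {T : ℕ} {d : ℕ → ℕ} {x : ℕ → E} {xx : ℕ → ℕ → E} {δ : ℝ}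

theorem sum_sub_feedback_eq (hd : ∀ t ∈ Icc 1 T, 1 ≤ d t ∧ t + d t - 1 ≤ T)
    (hxx0 : ∀ t ∈ Icc 1 T, xx t 0 = x t)
    (hxnext : ∀ t ∈ Icc 1 T, x (t + 1) = xx t #(feedbackSet T d t)) (φ : E → ℝ) :
    ∑ k ∈ Icc 1 T, (φ (xx (k + d k - 1) (rankIn (feedbackSet T d (k + d k - 1)) k))
        - φ (xx (k + d k - 1) (rankIn (feedbackSet T d (k + d k - 1)) k + 1)))
      = φ (x 1) - φ (x (T + 1)) := by
  have hmaps : ∀ k ∈ Icc 1 T, k + d k - 1 ∈ Icc 1 T := fun k hk => by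
    have := hd k hk; simp only [mem_Icc] at hk ⊢; omega
  rw [← sum_fiberwise_of_maps_to hmaps]
  calc ∑ t ∈ Icc 1 T, ∑ k ∈ feedbackSet T d t,
        (φ (xx (k + d k - 1) (rankIn (feedbackSet T d (k + d k - 1)) k))
          - φ (xx (k + d k - 1) (rankIn (feedbackSet T d (k + d k - 1)) k + 1)))
      = ∑ t ∈ Icc 1 T, ∑ k ∈ feedbackSet T d t,
          (φ (xx t (rankIn (feedbackSet T d t) k)) - φ (xx t (rankIn (feedbackSet T d t) k + 1))) :=
        sum_congr rfl fun t _ => sum_congr rfl fun k hk => by rw [(mem_filter.1 hk).2]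
    _ = ∑ t ∈ Icc 1 T, -(φ (x (t + 1)) - φ (x t)) := sum_congr rfl fun t ht => by
        rw [sum_rankIn (fun i => φ (xx t i) - φ (xx t (i + 1))), sum_range_sub', hxx0 t ht,
          hxnext t ht, neg_sub]
    _ = φ (x 1) - φ (x (T + 1)) := by
        rw [sum_neg_distrib, ← Ico_add_one_right_eq_Icc,
          sum_Ico_sub (fun t => φ (x t)) (by omega : 1 ≤ T + 1), neg_sub]

section StepBound

variable [SeminormedAddCommGroup E] (hxx0 : ∀ t ∈ Icc 1 T, xx t 0 = x t)
  (hxnext : ∀ t ∈ Icc 1 T, x (t + 1) = xx t #(feedbackSet T d t))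
  (hstep : ∀ t ∈ Icc 1 T, ∀ i < #(feedbackSet T d t), ‖xx t (i + 1) - xx t i‖ ≤ δ)
include hxx0 hstep

theorem norm_sub_le_of_step_le {t j : ℕ} (ht : t ∈ Icc 1 T) (hj : j ≤ #(feedbackSet T d t)) :
    ‖xx t j - x t‖ ≤ j * δ := by
  rw [← hxx0 t ht, ← dist_eq_norm, dist_comm]
  simpa using dist_le_range_sum_of_dist_le (f := xx t) (d := fun _ => δ) j fun hi => by
    rw [dist_comm, dist_eq_norm]; exact hstep t ht _ (by omega)

include hxnext

theorem norm_sub_le_sum_of_step_le {a b : ℕ} (ha : 1 ≤ a) (hab : a ≤ b) (hb : b ≤ T + 1) :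
    ‖x b - x a‖ ≤ (∑ s ∈ Ico a b, #(feedbackSet T d s) : ℕ) * δ := by
  rw [← dist_eq_norm, dist_comm, Nat.cast_sum, sum_mul]
  refine dist_le_Ico_sum_of_dist_le hab fun {s} has hsb => ?_
  have hs : s ∈ Icc 1 T := mem_Icc.2 ⟨by omega, by omega⟩
  rw [dist_comm, dist_eq_norm, hxnext s hs]
  exact norm_sub_le_of_step_le hxx0 hstep hs le_rfl

theorem norm_sub_feedback_le (hd : ∀ t ∈ Icc 1 T, 1 ≤ d t ∧ t + d t - 1 ≤ T) {k : ℕ}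
    (hk : k ∈ Icc 1 T) :
    ‖x k - xx (k + d k - 1) (rankIn (feedbackSet T d (k + d k - 1)) k + 1)‖
      ≤ delayCount T d k * δ := by
  have hdk := hd k hk
  have hk' := mem_Icc.1 hk
  have hτ : k + d k - 1 ∈ Icc 1 T := mem_Icc.2 ⟨by omega, hdk.2⟩
  have hrank := rankIn_lt_card (mem_feedbackSet_self (d := d) hk)
  have hin := norm_sub_le_of_step_le hxx0 hstep hτ hrank
  have hout := norm_sub_le_sum_of_step_le hxx0 hxnext hstep hk'.1 (by omega : k ≤ k + d k - 1)
    (by omega)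
  calc ‖x k - xx (k + d k - 1) (rankIn (feedbackSet T d (k + d k - 1)) k + 1)‖
      ≤ ‖xx (k + d k - 1) (rankIn (feedbackSet T d (k + d k - 1)) k + 1) - x (k + d k - 1)‖
        + ‖x (k + d k - 1) - x k‖ := by
        rw [norm_sub_rev]; exact norm_sub_le_norm_sub_add_norm_sub ..
    _ ≤ delayCount T d k * δ := by
        rw [delayCount]; push_cast at hin hout ⊢; linarith

theorem sum_le_of_le_sub_add_norm_sub (hd : ∀ t ∈ Icc 1 T, 1 ≤ d t ∧ t + d t - 1 ≤ T)
    (hδ : 0 ≤ δ) (φ : E → ℝ) {a : ℕ → ℝ} {c e : ℝ} (hc : 0 ≤ c)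
    (ha : ∀ k ∈ Icc 1 T, a k ≤
      φ (xx (k + d k - 1) (rankIn (feedbackSet T d (k + d k - 1)) k))
        - φ (xx (k + d k - 1) (rankIn (feedbackSet T d (k + d k - 1)) k + 1))
        + c * ‖x k - xx (k + d k - 1) (rankIn (feedbackSet T d (k + d k - 1)) k + 1)‖ + e) :
    ∑ k ∈ Icc 1 T, a k ≤
      φ (x 1) - φ (x (T + 1)) + c * (2 * (∑ k ∈ Icc 1 T, (d k : ℝ)) * δ) + T * e := by
  have hdist : ∑ k ∈ Icc 1 T,
      ‖x k - xx (k + d k - 1) (rankIn (feedbackSet T d (k + d k - 1)) k + 1)‖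
        ≤ 2 * (∑ k ∈ Icc 1 T, (d k : ℝ)) * δ := by
    refine (sum_le_sum fun k hk => norm_sub_feedback_le hxx0 hxnext hstep hd hk).trans ?_
    rw [← sum_mul]
    gcongr
    exact_mod_cast sum_delayCount_le hd
  refine (sum_le_sum ha).trans ?_
  rw [sum_add_distrib, sum_add_distrib, sum_sub_feedback_eq hd hxx0 hxnext, ← mul_sum,
    sum_const, Nat.card_Icc, nsmul_eq_mul, Nat.add_sub_cancel]
  gcongr

end StepBound

end DelayedTrajectory

section DelayedMirrorDescent

variable {E : Type*} [NormedAddCommGroup E] [NormedSpace ℝ E]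

theorem delayed_mirror_descent_linear_regret_le {X : Set E} (hX : Convex ℝ X) {R : ℝ}
    (hR : ∀ z ∈ X, ‖z‖ ≤ R) {T : ℕ} {d : ℕ → ℕ} (hd : ∀ t ∈ Icc 1 T, 1 ≤ d t ∧ t + d t - 1 ≤ T)
    {ψ : E → ℝ} (hψ : Differentiable ℝ ψ) {σ ξ η G : ℝ} (hσ : 0 < σ) (hξ : 0 ≤ ξ) (hη : 0 < η)
    (hG : 0 ≤ G) (hsc : ∀ a ∈ X, ∀ b ∈ X, σ / 2 * ‖a - b‖ ^ 2 ≤ bregman ψ a b)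
    (hlip : ∀ a ∈ X, ∀ b ∈ X, ‖fderiv ℝ ψ a - fderiv ℝ ψ b‖ ≤ ξ * G * ‖a - b‖)
    {g : ℕ → E →L[ℝ] ℝ} (hg : ∀ k ∈ Icc 1 T, ‖g k‖ ≤ G) {x : ℕ → E} {xx : ℕ → ℕ → E}
    (hxxmem : ∀ t ∈ Icc 1 T, ∀ i ≤ #(feedbackSet T d t), xx t i ∈ X)
    (hxx0 : ∀ t ∈ Icc 1 T, xx t 0 = x t)
    (hxnext : ∀ t ∈ Icc 1 T, x (t + 1) = xx t #(feedbackSet T d t))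
    (hstep : ∀ t ∈ Icc 1 T, ∀ k ∈ feedbackSet T d t, IsApproxMirrorStep X ψ η (g k)
      (xx t (rankIn (feedbackSet T d t) k)) (xx t (rankIn (feedbackSet T d t) k + 1))
      (η ^ 3 / (2 * σ)))
    {u : E} (hu : u ∈ X) :
    η * ∑ k ∈ Icc 1 T, g k (x k - u) ≤ bregman ψ u (x 1) - bregman ψ u (x (T + 1))
      + η * G * (2 * (∑ k ∈ Icc 1 T, (d k : ℝ)) * ((η * G + η ^ 2) / σ))
      + T * (η ^ 3 * G / σ + 2 * R * ξ * G * η ^ 2 / σ) := by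
  have hround : ∀ k ∈ Icc 1 T,
      IsApproxMirrorStep X ψ η (g k) (xx (k + d k - 1) (rankIn (feedbackSet T d (k + d k - 1)) k))
        (xx (k + d k - 1) (rankIn (feedbackSet T d (k + d k - 1)) k + 1)) (η ^ 3 / (2 * σ))
      ∧ xx (k + d k - 1) (rankIn (feedbackSet T d (k + d k - 1)) k) ∈ X
      ∧ xx (k + d k - 1) (rankIn (feedbackSet T d (k + d k - 1)) k + 1) ∈ X := by
    intro k hk
    have hτ : k + d k - 1 ∈ Icc 1 T := by
      have := hd k hk; simp only [mem_Icc] at hk ⊢; omega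
    have hrank := rankIn_lt_card (mem_feedbackSet_self (d := d) hk)
    exact ⟨hstep _ hτ k (mem_feedbackSet_self hk), hxxmem _ hτ _ hrank.le, hxxmem _ hτ _ hrank⟩
  have hsteps : ∀ t ∈ Icc 1 T, ∀ i < #(feedbackSet T d t),
      ‖xx t (i + 1) - xx t i‖ ≤ (η * G + η ^ 2) / σ := by
    intro t _
    refine forall_lt_card_iff_forall_rankIn.2 fun k hk => ?_
    obtain ⟨hkT, rfl⟩ := mem_filter.1 hk
    obtain ⟨hstep, hw, hy⟩ := hround k hkT
    exact hstep.norm_sub_le_of_norm_le hX hψ hσ hη hsc hw hy (hg k hkT)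
  rw [mul_sum]
  refine sum_le_of_le_sub_add_norm_sub hxx0 hxnext hsteps hd (by positivity) (bregman ψ u)
    (mul_nonneg hη.le hG) fun k hk => ?_
  obtain ⟨hstep, hw, hy⟩ := hround k hk
  exact hstep.mul_apply_sub_le hX hψ hσ hη hsc hw hy hu (hg k hk) hξ hR hlip

end DelayedMirrorDescent

theorem sdmd_gc_constants_le {η σ ξ R G T D : ℝ} (hη : 0 < η) (hσ : 0 < σ) (hξ : 0 ≤ ξ)
    (hR : 0 ≤ R) (hG : 0 ≤ G) (hT : 0 ≤ T) (hD : 0 ≤ D) :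
    η * G * (2 * D * ((η * G + η ^ 2) / σ)) + T * (η ^ 3 * G / σ + 2 * R * ξ * G * η ^ 2 / σ)
      ≤ η * (η * (G ^ 2 * T + 8 * ξ * R * G * T + 2 * η * G * T + 4 * G ^ 2 * D
          + 8 * η * G * D) / (2 * σ) + 2 * η ^ 2 * ξ * G ^ 2 * D / σ ^ 2) := by
  have hslack : 0 ≤ η ^ 2 * G ^ 2 * T / (2 * σ) + 2 * ξ * R * G * η ^ 2 * T / σ
      + 2 * η ^ 3 * G * D / σ + 2 * η ^ 3 * ξ * G ^ 2 * D / σ ^ 2 := by positivity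
  rw [← sub_nonneg]
  convert hslack using 1
  field_simp
  ring

theorem sdmd_gc_regret_general
    {E : Type*} [NormedAddCommGroup E] [NormedSpace ℝ E]
    (X : Set E) (hX : Convex ℝ X)
    (R : ℝ) (hR : ∀ z ∈ X, ‖z‖ ≤ R)
    (T : ℕ) (hT : 1 ≤ T) (d : ℕ → ℕ)
    (hd : ∀ t ∈ Finset.Icc 1 T, 1 ≤ d t ∧ t + d t - 1 ≤ T)
    (F : ℕ → Finset ℕ)
    (hF : ∀ t, F t = (Finset.Icc 1 T).filter (fun k => k + d k - 1 = t))
    (f : ℕ → E → ℝ) (Gstar : ℝ)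
    (hfdiff : ∀ t ∈ Finset.Icc 1 T, Differentiable ℝ (f t))
    (hfconv : ∀ t ∈ Finset.Icc 1 T, ConvexOn ℝ X (f t))
    (hG : ∀ t ∈ Finset.Icc 1 T, ∀ z ∈ X, ‖fderiv ℝ (f t) z‖ ≤ Gstar)
    (ψ : E → ℝ) (σ ξ : ℝ) (hσ : 0 < σ) (hξ : 0 < ξ)
    (hψdiff : Differentiable ℝ ψ)
    (B : E → E → ℝ)
    (hB : ∀ a b, B a b = ψ a - ψ b - fderiv ℝ ψ b (a - b))
    (hψsc : ∀ a ∈ X, ∀ b ∈ X, B a b ≥ σ / 2 * ‖a - b‖ ^ 2)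
    (hψlip : ∀ a ∈ X, ∀ b ∈ X,
      ‖fderiv ℝ ψ a - fderiv ℝ ψ b‖ ≤ ξ * Gstar * ‖a - b‖)
    (η : ℝ) (hη : 0 < η)
    (x : ℕ → E) (xx : ℕ → ℕ → E) (hx1 : x 1 ∈ X)
    (hxxmem : ∀ t ∈ Finset.Icc 1 T, ∀ i ≤ (F t).card, xx t i ∈ X)
    (hxx0 : ∀ t ∈ Finset.Icc 1 T, xx t 0 = x t)
    (hxnext : ∀ t ∈ Finset.Icc 1 T, x (t + 1) = xx t (F t).card)
    (A : ℕ → ℕ → E → ℝ)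
    (hA : ∀ t k z, A t k z =
      fderiv ℝ (f k) (x k) z
        + B z (xx t ((F t).filter (fun s => s < k)).card) / η)
    (hopt : ∀ t ∈ Finset.Icc 1 T, ∀ k ∈ F t, ∃ ystar ∈ X,
      IsMinOn (A t k) X ystar ∧
        A t k (xx t (((F t).filter (fun s => s < k)).card + 1))
          ≤ A t k ystar + η ^ 3 / (2 * σ))
    :
    ∀ xstar ∈ X,
      ∑ t ∈ Finset.Icc 1 T, f t (x t) - ∑ t ∈ Finset.Icc 1 T, f t xstar
        ≤ η * (Gstar ^ 2 * (T : ℝ) + 8 * ξ * R * Gstar * (T : ℝ)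
              + 2 * η * Gstar * (T : ℝ)
              + 4 * Gstar ^ 2 * ∑ t ∈ Finset.Icc 1 T, (d t : ℝ)
              + 8 * η * Gstar * ∑ t ∈ Finset.Icc 1 T, (d t : ℝ)) / (2 * σ)
          + 2 * η ^ 2 * ξ * Gstar ^ 2 * (∑ t ∈ Finset.Icc 1 T, (d t : ℝ)) / σ ^ 2
          + B xstar (x 1) / η := by
  intro u hu
  obtain rfl : B = bregman ψ := funext₂ hB
  obtain rfl : F = feedbackSet T d := funext hF
  obtain rfl : A = fun t k => mirrorObjective ψ η (fderiv ℝ (f k) (x k))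
      (xx t (rankIn (feedbackSet T d t) k)) := funext₃ hA
  have hxnextX : ∀ t ∈ Icc 1 T, x (t + 1) ∈ X := fun t ht => hxnext t ht ▸ hxxmem t ht _ le_rfl
  have hxX : ∀ k ∈ Icc 1 T, x k ∈ X := by
    rintro (_ | _ | k) hk
    · simp at hk
    · exact hx1
    · exact hxnextX (k + 1) (by simp only [mem_Icc] at hk ⊢; omega)
  have hG0 : 0 ≤ Gstar := (norm_nonneg _).trans (hG 1 (mem_Icc.2 ⟨le_rfl, hT⟩) (x 1) hx1)
  have hlinear := delayed_mirror_descent_linear_regret_le hX hR hd hψdiff hσ hξ.le hη hG0 hψsc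
    hψlip (fun k hk => hG k hk (x k) (hxX k hk)) hxxmem hxx0 hxnext hopt hu
  have hconvex : ∑ k ∈ Icc 1 T, f k (x k) - ∑ k ∈ Icc 1 T, f k u
      ≤ ∑ k ∈ Icc 1 T, fderiv ℝ (f k) (x k) (x k - u) := by
    rw [← sum_sub_distrib]
    exact sum_le_sum fun k hk =>
      (hfconv k hk).sub_le_apply_sub_of_hasFDerivAt (hxX k hk) hu (hfdiff k hk (x k)).hasFDerivAt
  have hconst := sdmd_gc_constants_le hη hσ hξ.le ((norm_nonneg _).trans (hR _ hx1)) hG0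
    (Nat.cast_nonneg T) (by positivity : (0 : ℝ) ≤ ∑ t ∈ Icc 1 T, (d t : ℝ))
  have hlast := bregman_nonneg hψsc hσ.le hu (hxnextX T (mem_Icc.2 ⟨hT, le_rfl⟩))
  refine hconvex.trans (le_of_mul_le_mul_left ?_ hη)
  rw [mul_add, mul_div_cancel₀ _ hη.ne']
  linarith

/-- Theorem 5: SDMD-GC regret bound. -/
theorem sdmd_gc_regret
    {E : Type*} [NormedAddCommGroup E] [NormedSpace ℝ E]
    (X : Set E) (hXne : X.Nonempty) (hX : Convex ℝ X)
    (R : ℝ) (hR : ∀ z ∈ X, ‖z‖ ≤ R)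
    (T : ℕ) (hT : 1 ≤ T) (d : ℕ → ℕ)
    (hd : ∀ t ∈ Finset.Icc 1 T, 1 ≤ d t ∧ t + d t - 1 ≤ T)
    (F : ℕ → Finset ℕ)
    (hF : ∀ t, F t = (Finset.Icc 1 T).filter (fun k => k + d k - 1 = t))
    (f : ℕ → E → ℝ) (Gstar : ℝ)
    (hfdiff : ∀ t ∈ Finset.Icc 1 T, Differentiable ℝ (f t))
    (hfconv : ∀ t ∈ Finset.Icc 1 T, ConvexOn ℝ X (f t))
    (hG : ∀ t ∈ Finset.Icc 1 T, ∀ z ∈ X, ‖fderiv ℝ (f t) z‖ ≤ Gstar)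
    (ψ : E → ℝ) (σ ξ : ℝ) (hσ : 0 < σ) (hξ : 0 < ξ)
    (hψdiff : Differentiable ℝ ψ)
    (B : E → E → ℝ)
    (hB : ∀ a b, B a b = ψ a - ψ b - fderiv ℝ ψ b (a - b))
    (hψsc : ∀ a ∈ X, ∀ b ∈ X, B a b ≥ σ / 2 * ‖a - b‖ ^ 2)
    (hψlip : ∀ a ∈ X, ∀ b ∈ X,
      ‖fderiv ℝ ψ a - fderiv ℝ ψ b‖ ≤ ξ * Gstar * ‖a - b‖)
    (η : ℝ) (hη : 0 < η)
    (x : ℕ → E) (xx : ℕ → ℕ → E) (hx1 : x 1 ∈ X)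
    (hxxmem : ∀ t ∈ Finset.Icc 1 T, ∀ i ≤ (F t).card, xx t i ∈ X)
    (hxx0 : ∀ t ∈ Finset.Icc 1 T, xx t 0 = x t)
    (hxnext : ∀ t ∈ Finset.Icc 1 T, x (t + 1) = xx t (F t).card)
    (A : ℕ → ℕ → E → ℝ)
    (hA : ∀ t k z, A t k z =
      fderiv ℝ (f k) (x k) z
        + B z (xx t ((F t).filter (fun s => s < k)).card) / η)
    (hopt : ∀ t ∈ Finset.Icc 1 T, ∀ k ∈ F t, ∃ ystar ∈ X,
      IsMinOn (A t k) X ystar ∧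
        A t k (xx t (((F t).filter (fun s => s < k)).card + 1))
          ≤ A t k ystar + η ^ 3 / (2 * σ))
    :
    ∀ xstar ∈ X,
      ∑ t ∈ Finset.Icc 1 T, f t (x t) - ∑ t ∈ Finset.Icc 1 T, f t xstar
        ≤ η * (Gstar ^ 2 * (T : ℝ) + 8 * ξ * R * Gstar * (T : ℝ)
              + 2 * η * Gstar * (T : ℝ)
              + 4 * Gstar ^ 2 * ∑ t ∈ Finset.Icc 1 T, (d t : ℝ)
              + 8 * η * Gstar * ∑ t ∈ Finset.Icc 1 T, (d t : ℝ)) / (2 * σ)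
          + 2 * η ^ 2 * ξ * Gstar ^ 2 * (∑ t ∈ Finset.Icc 1 T, (d t : ℝ)) / σ ^ 2
          + B xstar (x 1) / η :=
  sdmd_gc_regret_general X hX R hR T hT d hd F hF f Gstar hfdiff hfconv hG ψ σ ξ hσ hξ hψdiff B hB
    hψsc hψlip η hη x xx hx1 hxxmem hxx0 hxnext A hA hopt
end

section
/- (Corollary 2, Euclidean case) Let E be a real inner product space and run FTDL-RSC with losses that are γ-strongly convex in the classical sense (i.e., γ-strongly convex relative to ψ(x) = ½‖x‖², which is 1-strongly convex) and gradient bound ‖∇f_t(x)‖ ≤ G₂ on X. Then for every x* ∈ X, Reg_T := Σ_{t=1}^T f_t(x_t) − Σ_{t=1}^T f_t(x*) ≤ 3dG₂²(1 + ln T)/γ, where d := max_{1≤t≤T} d_t. -/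
/-!
Let `Y_t` minimise over `X` the cumulative loss `F̄_t` of the feedback received by time `t`, and
let `τ_k = k + d_k - 1` be the time at which the feedback of round `k` arrives. The
be-the-leader lemma gives `∑_k f_k(Y_{τ_k}) ≤ ∑_k f_k(x*)`, so the regret is at most
`G₂ ∑_k ‖x_k - Y_{τ_k}‖`. Writing `n_t` for the number of losses received by time `t`, `F̄_t` is
`γ n_t`-strongly convex, so quadratic growth at its minimiser yields: consecutive leaders differ by
at most `(2G₂/γ) |F_s| / n_s`, and `x_{t+1}` lies within `(G₂/(2γ)) |F_s| / n_s` of `Y_t`, where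
`s` is the last round `≤ t` with feedback, which is fewer than `d` rounds before `t`. Every share
`|F_s| / n_s` is thus counted at most `d` times in each of the two resulting sums, and
`∑_s |F_s| / n_s ≤ 1 + log n_T = 1 + log T`. The first round is covered by the bound `2G₂/γ` on
the diameter of `X` that strong convexity and bounded gradients impose.
-/

open Finset

theorem le_div_of_mul_sq_le {μ L r : ℝ} (hμ : 0 < μ) (hL : 0 ≤ L) (h : μ * r ^ 2 ≤ L * r) :
    r ≤ L / μ := by
  rw [le_div_iff₀ hμ]
  rcases lt_or_ge r 0 with hr | hr
  · nlinarith
  · rcases hr.eq_or_lt with rfl | hr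
    · simpa using hL
    · nlinarith

theorem sum_sum_le_mul_sum {ι κ : Type*} [DecidableEq κ] (A : Finset ι) (B : Finset κ)
    (W : ι → Finset κ) (w : κ → ℝ) (D : ℕ) (hW : ∀ i ∈ A, W i ⊆ B) (hw : ∀ j ∈ B, 0 ≤ w j)
    (hD : ∀ j ∈ B, #{i ∈ A | j ∈ W i} ≤ D) :
    ∑ i ∈ A, ∑ j ∈ W i, w j ≤ D * ∑ j ∈ B, w j := by
  calc ∑ i ∈ A, ∑ j ∈ W i, w j = ∑ j ∈ B, ∑ i ∈ A with j ∈ W i, w j :=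
        sum_comm' fun i j => by
          simp only [mem_filter]
          exact ⟨fun h => ⟨⟨h.1, h.2⟩, hW i h.1 h.2⟩, fun h => h.1⟩
    _ = ∑ j ∈ B, #{i ∈ A | j ∈ W i} * w j := by simp only [sum_const, nsmul_eq_mul]
    _ ≤ ∑ j ∈ B, D * w j := sum_le_sum fun j hj =>
        mul_le_mul_of_nonneg_right (by exact_mod_cast hD j hj) (hw j hj)
    _ = D * ∑ j ∈ B, w j := (mul_sum ..).symm

theorem sum_comp_le_mul_sum {ι κ : Type*} [DecidableEq κ] (A : Finset ι) (B : Finset κ)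
    (g : ι → κ) (w : κ → ℝ) (D : ℕ) (hg : ∀ i ∈ A, g i ∈ B) (hw : ∀ j ∈ B, 0 ≤ w j)
    (hD : ∀ j ∈ B, #{i ∈ A | g i = j} ≤ D) :
    ∑ i ∈ A, w (g i) ≤ D * ∑ j ∈ B, w j := by
  rw [← sum_fiberwise_of_maps_to' hg, mul_sum]
  refine sum_le_sum fun j hj => ?_
  rw [sum_const, nsmul_eq_mul]
  exact mul_le_mul_of_nonneg_right (by exact_mod_cast hD j hj) (hw j hj)

theorem sum_div_sum_Icc_le_one_add_log (c : ℕ → ℝ) (hc : ∀ i, 0 ≤ c i) (hc₁ : 1 ≤ c 1)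
    {T : ℕ} (hT : 1 ≤ T) :
    ∑ t ∈ Icc 1 T, c t / ∑ s ∈ Icc 1 t, c s ≤ 1 + Real.log (∑ s ∈ Icc 1 T, c s) := by
  have hN : ∀ t, 1 ≤ t → 1 ≤ ∑ s ∈ Icc 1 t, c s := fun t ht =>
    hc₁.trans (single_le_sum (fun i _ => hc i) (by simp [ht]))
  induction T, hT using Nat.le_induction with
  | base => simp [div_self (by linarith : c 1 ≠ 0), Real.log_nonneg hc₁]
  | succ T hT ih =>
    rw [sum_Icc_succ_top (by omega), sum_Icc_succ_top (by omega)]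
    set N := ∑ s ∈ Icc 1 T, c s
    have hN₀ : 0 < N := by linarith [hN T hT]
    have hN₁ : 0 < N + c (T + 1) := by linarith [hc (T + 1)]
    have hlog := Real.log_le_sub_one_of_pos (div_pos hN₀ hN₁)
    rw [Real.log_div hN₀.ne' hN₁.ne'] at hlog
    have : N / (N + c (T + 1)) - 1 = -(c (T + 1) / (N + c (T + 1))) := by
      field_simp
      ring
    linarith

-- The be-the-leader lemma.
theorem sum_apply_leader_le {α : Type*} {X : Set α} (g : ℕ → α → ℝ) (Y : ℕ → α) {T : ℕ}
    (hY : ∀ t ∈ Icc 1 T, Y t ∈ X ∧ IsMinOn (fun z => ∑ s ∈ Icc 1 t, g s z) X (Y t))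
    {z : α} (hz : z ∈ X) :
    ∑ t ∈ Icc 1 T, g t (Y t) ≤ ∑ t ∈ Icc 1 T, g t z := by
  induction T generalizing z with
  | zero => simp
  | succ T ih =>
    have hlast : T + 1 ∈ Icc 1 (T + 1) := by simp
    have hprev := ih (fun t ht => hY t (Icc_subset_Icc_right (by omega) ht)) (hY (T + 1) hlast).1
    have hmin := isMinOn_iff.1 (hY (T + 1) hlast).2 z hz
    simp only [sum_Icc_succ_top (by omega : 1 ≤ T + 1)] at hmin ⊢
    linarith

section FirstOrder

variable {E : Type*} [NormedAddCommGroup E] [NormedSpace ℝ E] {X : Set E} {φ : E → ℝ}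
  {μ : ℝ} {a b y : E}

theorem IsMinOn.fderiv_apply_sub_nonneg (hmin : IsMinOn φ X y) (hX : Convex ℝ X) (hy : y ∈ X)
    (ha : a ∈ X) (hφ : DifferentiableAt ℝ φ y) : 0 ≤ fderiv ℝ φ y (a - y) :=
  hmin.localize.hasFDerivWithinAt_nonneg hφ.hasFDerivAt.hasFDerivWithinAt
    (mem_posTangentConeAt_of_segment_subset (by simpa using hX.segment_subset hy ha))

/-- The paper's first-order strong convexity (Mathlib's `StrongConvexOn` is derivative-free). -/
def FirstOrderStrongConvexOn (μ : ℝ) (X : Set E) (φ : E → ℝ) : Prop :=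
  ∀ a ∈ X, ∀ b ∈ X, μ / 2 * ‖a - b‖ ^ 2 ≤ φ a - φ b - fderiv ℝ φ b (a - b)

namespace FirstOrderStrongConvexOn

theorem sum {ι : Type*} {s : Finset ι} {φ : ι → E → ℝ} {μ : ι → ℝ}
    (h : ∀ i ∈ s, FirstOrderStrongConvexOn (μ i) X (φ i))
    (hφ : ∀ i ∈ s, ∀ b ∈ X, DifferentiableAt ℝ (φ i) b) :
    FirstOrderStrongConvexOn (∑ i ∈ s, μ i) X (fun z => ∑ i ∈ s, φ i z) := by
  intro a ha b hb
  rw [fderiv_fun_sum fun i hi => hφ i hi b hb, FunLike.coe_sum, Finset.sum_apply,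
    sum_div, sum_mul, ← sum_sub_distrib, ← sum_sub_distrib]
  exact sum_le_sum fun i hi => h i hi a ha b hb

theorem le_sub_of_isMinOn (h : FirstOrderStrongConvexOn μ X φ) (hmin : IsMinOn φ X y)
    (hX : Convex ℝ X) (hy : y ∈ X) (ha : a ∈ X) (hφ : DifferentiableAt ℝ φ y) :
    μ / 2 * ‖a - y‖ ^ 2 ≤ φ a - φ y := by
  linarith [h a ha y hy, hmin.fderiv_apply_sub_nonneg hX hy ha hφ]

theorem sub_le_norm_fderiv_mul (h : FirstOrderStrongConvexOn μ X φ) (hμ : 0 ≤ μ) (ha : a ∈ X)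
    (hb : b ∈ X) : φ a - φ b ≤ ‖fderiv ℝ φ a‖ * ‖a - b‖ := by
  have hgap := h b hb a ha
  have hsub : fderiv ℝ φ a (b - a) = -fderiv ℝ φ a (a - b) := by rw [← map_neg, neg_sub]
  have : fderiv ℝ φ a (a - b) ≤ ‖fderiv ℝ φ a‖ * ‖a - b‖ :=
    (le_abs_self _).trans ((fderiv ℝ φ a).le_opNorm _)
  nlinarith [sq_nonneg ‖b - a‖]

theorem norm_sub_le (h : FirstOrderStrongConvexOn μ X φ) (hμ : 0 < μ) (ha : a ∈ X)
    (hb : b ∈ X) : ‖a - b‖ ≤ (‖fderiv ℝ φ a‖ + ‖fderiv ℝ φ b‖) / μ := by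
  refine le_div_of_mul_sq_le hμ (by positivity) ?_
  have hab := h a ha b hb
  have hba := h b hb a ha
  have hsub : fderiv ℝ φ a (b - a) = -fderiv ℝ φ a (a - b) := by rw [← map_neg, neg_sub]
  have h₁ : fderiv ℝ φ a (a - b) ≤ ‖fderiv ℝ φ a‖ * ‖a - b‖ :=
    (le_abs_self _).trans ((fderiv ℝ φ a).le_opNorm _)
  have h₂ : -fderiv ℝ φ b (a - b) ≤ ‖fderiv ℝ φ b‖ * ‖a - b‖ :=
    (neg_le_abs _).trans ((fderiv ℝ φ b).le_opNorm _)
  rw [norm_sub_rev b a] at hba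
  nlinarith

end FirstOrderStrongConvexOn

end FirstOrder

section Delays

variable {T D t : ℕ} {τ : ℕ → ℕ}

/-- The paper's `F_t`, for the feedback times `τ k = k + d_k - 1`. -/
def feedbackAt (T : ℕ) (τ : ℕ → ℕ) (t : ℕ) : Finset ℕ := {k ∈ Icc 1 T | τ k = t}

/-- The paper's `F̄_t`. -/
def cumLoss {E : Type*} (T : ℕ) (τ : ℕ → ℕ) (f : ℕ → E → ℝ) (t : ℕ) (z : E) : ℝ :=
  ∑ s ∈ Icc 1 t, ∑ k ∈ feedbackAt T τ s, f k z

def numArrived (T : ℕ) (τ : ℕ → ℕ) (t : ℕ) : ℝ := ∑ s ∈ Icc 1 t, (#(feedbackAt T τ s) : ℝ)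

noncomputable def feedbackShare (T : ℕ) (τ : ℕ → ℕ) (s : ℕ) : ℝ :=
  #(feedbackAt T τ s) / numArrived T τ s

/-- `0` if no feedback arrives by time `t`. -/
def lastFeedback (T : ℕ) (τ : ℕ → ℕ) (t : ℕ) : ℕ :=
  Nat.findGreatest (fun s => (feedbackAt T τ s).Nonempty) t

theorem mem_feedbackAt {k : ℕ} : k ∈ feedbackAt T τ t ↔ k ∈ Icc 1 T ∧ τ k = t := mem_filter

theorem one_le_of_feedbackAt_nonempty (h : (feedbackAt T τ t).Nonempty) : 1 ≤ T := by
  obtain ⟨k, hk⟩ := h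
  have := (mem_feedbackAt.1 hk).1
  simp only [mem_Icc] at this
  omega

theorem sum_Icc_sum_feedbackAt {M : Type*} [AddCommMonoid M]
    (hτ : ∀ k ∈ Icc 1 T, τ k ∈ Icc 1 T) (g : ℕ → M) :
    ∑ t ∈ Icc 1 T, ∑ k ∈ feedbackAt T τ t, g k = ∑ k ∈ Icc 1 T, g k :=
  sum_fiberwise_of_maps_to hτ g

theorem numArrived_self (hτ : ∀ k ∈ Icc 1 T, τ k ∈ Icc 1 T) : numArrived T τ T = T := by
  simpa [numArrived] using sum_Icc_sum_feedbackAt hτ (fun _ => (1 : ℝ))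

theorem one_le_numArrived (h₁ : (feedbackAt T τ 1).Nonempty) (ht : 1 ≤ t) :
    1 ≤ numArrived T τ t := by
  have : (1 : ℝ) ≤ #(feedbackAt T τ 1) := by exact_mod_cast h₁.card_pos
  exact this.trans (single_le_sum (f := fun s => (#(feedbackAt T τ s) : ℝ))
    (fun _ _ => by positivity) (by simp [ht]))

theorem feedbackShare_nonneg (s : ℕ) : 0 ≤ feedbackShare T τ s :=
  div_nonneg (Nat.cast_nonneg _) (sum_nonneg fun _ _ => Nat.cast_nonneg _)

theorem feedbackShare_one (h₁ : (feedbackAt T τ 1).Nonempty) : feedbackShare T τ 1 = 1 := by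
  simp [feedbackShare, numArrived, h₁.card_pos.ne']

theorem sum_feedbackShare_le (hτ : ∀ k ∈ Icc 1 T, τ k ∈ Icc 1 T)
    (h₁ : (feedbackAt T τ 1).Nonempty) :
    ∑ s ∈ Icc 1 T, feedbackShare T τ s ≤ 1 + Real.log T := by
  rw [← numArrived_self hτ]
  exact sum_div_sum_Icc_le_one_add_log _ (fun _ => Nat.cast_nonneg _)
    (by exact_mod_cast h₁.card_pos) (one_le_of_feedbackAt_nonempty h₁)

theorem lastFeedback_le (t : ℕ) : lastFeedback T τ t ≤ t := Nat.findGreatest_le t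

theorem one_le_lastFeedback (h₁ : (feedbackAt T τ 1).Nonempty) (ht : 1 ≤ t) :
    1 ≤ lastFeedback T τ t :=
  Nat.le_findGreatest ht h₁

theorem feedbackAt_lastFeedback_nonempty (h₁ : (feedbackAt T τ 1).Nonempty) (ht : 1 ≤ t) :
    (feedbackAt T τ (lastFeedback T τ t)).Nonempty :=
  Nat.findGreatest_spec (P := fun s => (feedbackAt T τ s).Nonempty) ht h₁

theorem lastFeedback_of_nonempty (h : (feedbackAt T τ t).Nonempty) : lastFeedback T τ t = t :=
  Nat.findGreatest_eq h

theorem cumLoss_lastFeedback {E : Type*} (f : ℕ → E → ℝ) (t : ℕ) :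
    cumLoss T τ f (lastFeedback T τ t) = cumLoss T τ f t := by
  ext z
  refine sum_subset (Icc_subset_Icc_right (lastFeedback_le t)) fun s hs hs' => ?_
  simp only [mem_Icc, not_and, not_le] at hs hs'
  rw [not_nonempty_iff_eq_empty.1 (Nat.findGreatest_is_greatest (hs' hs.1) hs.2), sum_empty]

theorem lt_lastFeedback_add (hτ : ∀ k ∈ Icc 1 T, k ≤ τ k ∧ τ k < k + D) (ht : t ∈ Icc 1 T) :
    t < lastFeedback T τ t + D := by
  have hD := hτ 1 (mem_Icc.2 ⟨le_rfl, (mem_Icc.1 ht).1.trans (mem_Icc.1 ht).2⟩)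
  rw [mem_Icc] at ht
  by_contra! hgap
  -- the round right after the last feedback has its own feedback delivered by time `t`
  set k := lastFeedback T τ t + 1
  have hk : k ∈ Icc 1 T := mem_Icc.2 ⟨by omega, by omega⟩
  obtain ⟨hkτ, hτk⟩ := hτ k hk
  exact Nat.findGreatest_is_greatest (show lastFeedback T τ t < τ k by omega) (by omega)
    ⟨k, mem_feedbackAt.2 ⟨hk, rfl⟩⟩

theorem eq_lastFeedback_add_one {α : Type*} {x : ℕ → α}
    (hlazy : ∀ t ∈ Icc 1 T, feedbackAt T τ t = ∅ → x (t + 1) = x t) (ht : t ≤ T) :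
    x (t + 1) = x (lastFeedback T τ t + 1) := by
  induction t with
  | zero => simp [lastFeedback]
  | succ t ih =>
    by_cases hne : (feedbackAt T τ (t + 1)).Nonempty
    · rw [lastFeedback_of_nonempty hne]
    · rw [lastFeedback, Nat.findGreatest_of_not hne,
        hlazy (t + 1) (mem_Icc.2 ⟨by omega, ht⟩) (not_nonempty_iff_eq_empty.1 hne)]
      exact ih (by omega)

theorem card_filter_mem_Icc_le (hτ : ∀ k ∈ Icc 1 T, τ k < k + D) (s : ℕ) :
    #{k ∈ Icc 1 T | s ∈ Icc k (τ k)} ≤ D := by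
  have hsub : {k ∈ Icc 1 T | s ∈ Icc k (τ k)} ⊆ Icc (s + 1 - D) s := fun k hk => by
    simp only [mem_filter, mem_Icc] at hk ⊢
    have := hτ k (mem_Icc.2 hk.1)
    omega
  have := card_le_card hsub
  simp only [Nat.card_Icc] at this
  omega

theorem card_filter_lastFeedback_le (hτ : ∀ k ∈ Icc 1 T, k ≤ τ k ∧ τ k < k + D) (s : ℕ) :
    #{k ∈ Icc 2 T | lastFeedback T τ (k - 1) = s} ≤ D := by
  have hsub : {k ∈ Icc 2 T | lastFeedback T τ (k - 1) = s} ⊆ Icc (s + 1) (s + D) :=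
    fun k hk => by
      simp only [mem_filter, mem_Icc] at hk ⊢
      have := lastFeedback_le (T := T) (τ := τ) (k - 1)
      have := lt_lastFeedback_add hτ (t := k - 1) (mem_Icc.2 ⟨by omega, by omega⟩)
      omega
  have := card_le_card hsub
  simp only [Nat.card_Icc] at this
  omega

end Delays

section Run

variable {E : Type*} [NormedAddCommGroup E] [NormedSpace ℝ E]

/-- A run `x` of FTDL-RSC on losses `f` whose feedback of round `k` arrives at time `τ k`, with
delays below `D`. -/
structure IsFTDLRun (X : Set E) (T D : ℕ) (τ : ℕ → ℕ) (f : ℕ → E → ℝ) (G γ : ℝ) (x : ℕ → E) :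
    Prop where
  convex : Convex ℝ X
  feedback_time : ∀ k ∈ Icc 1 T, k ≤ τ k ∧ τ k < k + D
  feedback_le : ∀ k ∈ Icc 1 T, τ k ≤ T
  feedbackAt_one_nonempty : (feedbackAt T τ 1).Nonempty
  differentiable : ∀ k ∈ Icc 1 T, Differentiable ℝ (f k)
  norm_fderiv_le : ∀ k ∈ Icc 1 T, ∀ z ∈ X, ‖fderiv ℝ (f k) z‖ ≤ G
  pos : 0 < γ
  strongConvex : ∀ k ∈ Icc 1 T, FirstOrderStrongConvexOn γ X (f k)
  mem_one : x 1 ∈ X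
  update : ∀ t ∈ Icc 1 T, (feedbackAt T τ t).Nonempty →
    x (t + 1) ∈ X ∧ ∃ y ∈ X, IsMinOn (cumLoss T τ f t) X y ∧
      cumLoss T τ f t (x (t + 1)) ≤ cumLoss T τ f t y
        + (#(feedbackAt T τ t) : ℝ) ^ 2 * G ^ 2 / (8 * γ * numArrived T τ t)
  lazy : ∀ t ∈ Icc 1 T, feedbackAt T τ t = ∅ → x (t + 1) = x t

namespace IsFTDLRun

variable {X : Set E} {T D : ℕ} {τ : ℕ → ℕ} {f : ℕ → E → ℝ} {G γ : ℝ} {x Y : ℕ → E} {t : ℕ}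

theorem one_le_horizon (h : IsFTDLRun X T D τ f G γ x) : 1 ≤ T :=
  one_le_of_feedbackAt_nonempty h.feedbackAt_one_nonempty

theorem mapsTo (h : IsFTDLRun X T D τ f G γ x) : ∀ k ∈ Icc 1 T, τ k ∈ Icc 1 T := fun k hk => by
  have := (h.feedback_time k hk).1
  simp only [mem_Icc] at hk ⊢
  exact ⟨by omega, h.feedback_le k (mem_Icc.2 hk)⟩

theorem lastFeedback_mem (h : IsFTDLRun X T D τ f G γ x) (ht : t ∈ Icc 1 T) :
    lastFeedback T τ t ∈ Icc 1 T :=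
  mem_Icc.2 ⟨one_le_lastFeedback h.feedbackAt_one_nonempty (mem_Icc.1 ht).1,
    (lastFeedback_le t).trans (mem_Icc.1 ht).2⟩

theorem iterate_mem (h : IsFTDLRun X T D τ f G γ x) {k : ℕ} (hk : k ∈ Icc 1 T) : x k ∈ X := by
  rcases eq_or_ne k 1 with rfl | hk₁
  · exact h.mem_one
  obtain ⟨t, rfl⟩ : ∃ t, k = t + 1 := ⟨k - 1, by simp only [mem_Icc] at hk; omega⟩
  have ht : t ∈ Icc 1 T := by simp only [mem_Icc] at hk ⊢; omega
  rw [eq_lastFeedback_add_one h.lazy (mem_Icc.1 ht).2]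
  exact (h.update _ (h.lastFeedback_mem ht)
    (feedbackAt_lastFeedback_nonempty h.feedbackAt_one_nonempty (mem_Icc.1 ht).1)).1

theorem bound_nonneg (h : IsFTDLRun X T D τ f G γ x) : 0 ≤ G :=
  (norm_nonneg _).trans (h.norm_fderiv_le 1 (mem_Icc.2 ⟨le_rfl, h.one_le_horizon⟩) _ h.mem_one)

theorem differentiable_sum_feedbackAt (h : IsFTDLRun X T D τ f G γ x) (s : ℕ) :
    Differentiable ℝ (fun z => ∑ k ∈ feedbackAt T τ s, f k z) :=
  Differentiable.fun_sum fun k hk => h.differentiable k (mem_feedbackAt.1 hk).1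

theorem differentiable_cumLoss (h : IsFTDLRun X T D τ f G γ x) (t : ℕ) :
    Differentiable ℝ (cumLoss T τ f t) :=
  Differentiable.fun_sum fun s _ => h.differentiable_sum_feedbackAt s

theorem strongConvex_cumLoss (h : IsFTDLRun X T D τ f G γ x) (t : ℕ) :
    FirstOrderStrongConvexOn (γ * numArrived T τ t) X (cumLoss T τ f t) := by
  have hsum := FirstOrderStrongConvexOn.sum (s := Icc 1 t)
    (fun s _ => FirstOrderStrongConvexOn.sum (s := feedbackAt T τ s) (μ := fun _ => γ)
      (fun k hk => h.strongConvex k (mem_feedbackAt.1 hk).1)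
      (fun k hk b _ => (h.differentiable k (mem_feedbackAt.1 hk).1).differentiableAt))
    (fun s _ b _ => (h.differentiable_sum_feedbackAt s).differentiableAt)
  have hμ : γ * numArrived T τ t = ∑ s ∈ Icc 1 t, ∑ _k ∈ feedbackAt T τ s, γ := by
    simp [numArrived, mul_sum, mul_comm]
  rw [hμ]
  exact hsum

theorem sum_feedbackAt_sub_le (h : IsFTDLRun X T D τ f G γ x) (s : ℕ) {a b : E} (ha : a ∈ X)
    (hb : b ∈ X) :
    ∑ k ∈ feedbackAt T τ s, f k a - ∑ k ∈ feedbackAt T τ s, f k b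
      ≤ #(feedbackAt T τ s) * G * ‖a - b‖ := by
  rw [← sum_sub_distrib, mul_assoc, ← nsmul_eq_mul, ← sum_const]
  refine sum_le_sum fun k hk => ?_
  have hk := (mem_feedbackAt.1 hk).1
  exact ((h.strongConvex k hk).sub_le_norm_fderiv_mul h.pos.le ha hb).trans
    (mul_le_mul_of_nonneg_right (h.norm_fderiv_le k hk a ha) (norm_nonneg _))

theorem exists_leader (h : IsFTDLRun X T D τ f G γ x) :
    ∃ Y : ℕ → E, ∀ t ∈ Icc 1 T, Y t ∈ X ∧ IsMinOn (cumLoss T τ f t) X (Y t) := by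
  have hex : ∀ t, ∃ y, t ∈ Icc 1 T → y ∈ X ∧ IsMinOn (cumLoss T τ f t) X y := fun t => by
    by_cases ht : t ∈ Icc 1 T
    · obtain ⟨-, y, hy, hmin, -⟩ := h.update _ (h.lastFeedback_mem ht)
        (feedbackAt_lastFeedback_nonempty h.feedbackAt_one_nonempty (mem_Icc.1 ht).1)
      rw [cumLoss_lastFeedback] at hmin
      exact ⟨y, fun _ => ⟨hy, hmin⟩⟩
    · exact ⟨x 1, fun ht' => absurd ht' ht⟩
  choose Y hY using hex
  exact ⟨Y, hY⟩

theorem norm_iterate_sub_leader_le (h : IsFTDLRun X T D τ f G γ x)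
    (hY : ∀ t ∈ Icc 1 T, Y t ∈ X ∧ IsMinOn (cumLoss T τ f t) X (Y t)) (ht : t ∈ Icc 1 T) :
    ‖x (t + 1) - Y t‖ ≤ G / (2 * γ) * feedbackShare T τ (lastFeedback T τ t) := by
  set s := lastFeedback T τ t
  have hs := h.lastFeedback_mem ht
  obtain ⟨hx, y, hy, hymin, hxy⟩ := h.update s hs
    (feedbackAt_lastFeedback_nonempty h.feedbackAt_one_nonempty (mem_Icc.1 ht).1)
  obtain ⟨hYX, hYmin⟩ := hY t ht
  rw [← cumLoss_lastFeedback f t] at hYmin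
  rw [eq_lastFeedback_add_one h.lazy (mem_Icc.1 ht).2]
  have hgrowth := (h.strongConvex_cumLoss s).le_sub_of_isMinOn hYmin h.convex hYX hx
    (h.differentiable_cumLoss s _)
  have hyY := isMinOn_iff.1 hymin (Y t) hYX
  have hn : 0 < numArrived T τ s :=
    zero_lt_one.trans_le (one_le_numArrived h.feedbackAt_one_nonempty (mem_Icc.1 hs).1)
  have hγ := h.pos
  refine le_of_pow_le_pow_left₀ two_ne_zero
    (mul_nonneg (div_nonneg h.bound_nonneg (by positivity)) (feedbackShare_nonneg s)) ?_
  refine le_of_mul_le_mul_left ?_ (by positivity : 0 < γ * numArrived T τ s / 2)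
  calc γ * numArrived T τ s / 2 * ‖x (s + 1) - Y t‖ ^ 2
      ≤ (#(feedbackAt T τ s) : ℝ) ^ 2 * G ^ 2 / (8 * γ * numArrived T τ s) := by linarith
    _ = γ * numArrived T τ s / 2 * (G / (2 * γ) * feedbackShare T τ s) ^ 2 := by
      rw [feedbackShare]
      field_simp
      ring

theorem norm_leader_sub_leader_succ_le (h : IsFTDLRun X T D τ f G γ x)
    (hY : ∀ t ∈ Icc 1 T, Y t ∈ X ∧ IsMinOn (cumLoss T τ f t) X (Y t)) (ht : 1 ≤ t)
    (ht' : t + 1 ≤ T) :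
    ‖Y t - Y (t + 1)‖ ≤ 2 * G / γ * feedbackShare T τ (t + 1) := by
  obtain ⟨hYX, hYmin⟩ := hY t (mem_Icc.2 ⟨ht, by omega⟩)
  obtain ⟨hYX', hYmin'⟩ := hY (t + 1) (mem_Icc.2 ⟨by omega, ht'⟩)
  have hgrowth := (h.strongConvex_cumLoss (t + 1)).le_sub_of_isMinOn hYmin' h.convex hYX' hYX
    (h.differentiable_cumLoss _ _)
  have hnew := h.sum_feedbackAt_sub_le (t + 1) hYX hYX'
  have hold := isMinOn_iff.1 hYmin (Y (t + 1)) hYX'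
  simp only [cumLoss, sum_Icc_succ_top (by omega : 1 ≤ t + 1)] at hgrowth hold
  have hn : 0 < numArrived T τ (t + 1) :=
    zero_lt_one.trans_le (one_le_numArrived h.feedbackAt_one_nonempty (by omega))
  have hγ := h.pos
  -- quadratic growth of `F̄_{t+1}` at `Y (t + 1)` against the Lipschitz bound of the losses
  -- arriving at `t + 1`, as `Y t` minimises the rest of `F̄_{t+1}`
  calc ‖Y t - Y (t + 1)‖
      ≤ #(feedbackAt T τ (t + 1)) * G / (γ * numArrived T τ (t + 1) / 2) :=
        le_div_of_mul_sq_le (by positivity) (mul_nonneg (Nat.cast_nonneg _) h.bound_nonneg)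
          (by linarith)
    _ = 2 * G / γ * feedbackShare T τ (t + 1) := by
      rw [feedbackShare]
      field_simp

theorem norm_leader_sub_le (h : IsFTDLRun X T D τ f G γ x)
    (hY : ∀ t ∈ Icc 1 T, Y t ∈ X ∧ IsMinOn (cumLoss T τ f t) X (Y t)) {m n : ℕ} (hm : 1 ≤ m)
    (hmn : m ≤ n) (hn : n ≤ T) :
    ‖Y m - Y n‖ ≤ 2 * G / γ * ∑ s ∈ Icc (m + 1) n, feedbackShare T τ s := by
  rw [← dist_eq_norm, ← Ico_add_one_right_eq_Icc, ← sum_Ico_add', mul_sum]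
  exact dist_le_Ico_sum_of_dist_le hmn fun hk hk' => by
    rw [dist_eq_norm]
    exact h.norm_leader_sub_leader_succ_le hY (hm.trans hk) (by omega)

theorem norm_iterate_one_sub_leader_le (h : IsFTDLRun X T D τ f G γ x)
    (hY : ∀ t ∈ Icc 1 T, Y t ∈ X ∧ IsMinOn (cumLoss T τ f t) X (Y t)) :
    ‖x 1 - Y (τ 1)‖ ≤ 2 * G / γ * ∑ s ∈ Icc 1 (τ 1), feedbackShare T τ s := by
  have h₁ : 1 ∈ Icc 1 T := mem_Icc.2 ⟨le_rfl, h.one_le_horizon⟩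
  have hY₁ := (hY _ (h.mapsTo 1 h₁)).1
  have hdiam := (h.strongConvex 1 h₁).norm_sub_le h.pos h.mem_one hY₁
  have hshare : 1 ≤ ∑ s ∈ Icc 1 (τ 1), feedbackShare T τ s :=
    (feedbackShare_one h.feedbackAt_one_nonempty).symm.le.trans
      (single_le_sum (fun s _ => feedbackShare_nonneg s)
        (mem_Icc.2 ⟨le_rfl, (h.feedback_time 1 h₁).1⟩))
  have hG₁ := h.norm_fderiv_le 1 h₁ _ h.mem_one
  have hG₂ := h.norm_fderiv_le 1 h₁ _ hY₁
  have hγ := h.pos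
  have hG := h.bound_nonneg
  calc ‖x 1 - Y (τ 1)‖ ≤ 2 * G / γ * 1 := by
        rw [mul_one, two_mul]
        exact hdiam.trans (by gcongr)
    _ ≤ _ := by gcongr

theorem norm_iterate_sub_leader_feedback_le (h : IsFTDLRun X T D τ f G γ x)
    (hY : ∀ t ∈ Icc 1 T, Y t ∈ X ∧ IsMinOn (cumLoss T τ f t) X (Y t)) {k : ℕ}
    (hk : k ∈ Icc 2 T) :
    ‖x k - Y (τ k)‖ ≤ G / (2 * γ) * feedbackShare T τ (lastFeedback T τ (k - 1))
      + 2 * G / γ * ∑ s ∈ Icc k (τ k), feedbackShare T τ s := by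
  obtain ⟨t, rfl⟩ : ∃ t, k = t + 1 := ⟨k - 1, by simp only [mem_Icc] at hk; omega⟩
  have hk' : t + 1 ∈ Icc 1 T := by simp only [mem_Icc] at hk ⊢; omega
  have := (h.feedback_time _ hk').1
  rw [Nat.add_sub_cancel]
  exact (norm_sub_le_norm_sub_add_norm_sub _ (Y t) _).trans (add_le_add
    (h.norm_iterate_sub_leader_le hY (by simp only [mem_Icc] at hk ⊢; omega))
    (h.norm_leader_sub_le hY (by simp only [mem_Icc] at hk; omega) (by omega)
      (h.feedback_le _ hk')))

theorem sum_norm_iterate_sub_leader_le (h : IsFTDLRun X T D τ f G γ x)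
    (hY : ∀ t ∈ Icc 1 T, Y t ∈ X ∧ IsMinOn (cumLoss T τ f t) X (Y t)) :
    ∑ k ∈ Icc 1 T, ‖x k - Y (τ k)‖
      ≤ 5 / 2 * D * G / γ * ∑ s ∈ Icc 1 T, feedbackShare T τ s := by
  set H := ∑ s ∈ Icc 1 T, feedbackShare T τ s
  have hsplit : ∀ g : ℕ → ℝ, ∑ k ∈ Icc 1 T, g k = g 1 + ∑ k ∈ Icc 2 T, g k := fun g => by
    rw [← insert_Icc_add_one_left_eq_Icc h.one_le_horizon, sum_insert (by simp)]
    rfl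
  have hwindows : ∑ k ∈ Icc 1 T, ∑ s ∈ Icc k (τ k), feedbackShare T τ s ≤ D * H :=
    sum_sum_le_mul_sum _ _ _ _ _
      (fun k hk => Icc_subset_Icc (mem_Icc.1 hk).1 (h.feedback_le k hk))
      (fun s _ => feedbackShare_nonneg s)
      (fun s _ => card_filter_mem_Icc_le (fun k hk => (h.feedback_time k hk).2) s)
  have hheads : ∑ k ∈ Icc 2 T, feedbackShare T τ (lastFeedback T τ (k - 1)) ≤ D * H :=
    sum_comp_le_mul_sum _ _ _ _ _
      (fun k hk => h.lastFeedback_mem (by simp only [mem_Icc] at hk ⊢; omega))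
      (fun s _ => feedbackShare_nonneg s) (fun s _ => card_filter_lastFeedback_le h.feedback_time s)
  have hγ := h.pos
  have hG := h.bound_nonneg
  calc ∑ k ∈ Icc 1 T, ‖x k - Y (τ k)‖
      = ‖x 1 - Y (τ 1)‖ + ∑ k ∈ Icc 2 T, ‖x k - Y (τ k)‖ := hsplit _
    _ ≤ 2 * G / γ * ∑ s ∈ Icc 1 (τ 1), feedbackShare T τ s
        + ∑ k ∈ Icc 2 T, (G / (2 * γ) * feedbackShare T τ (lastFeedback T τ (k - 1))
          + 2 * G / γ * ∑ s ∈ Icc k (τ k), feedbackShare T τ s) :=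
        add_le_add (h.norm_iterate_one_sub_leader_le hY)
          (sum_le_sum fun k hk => h.norm_iterate_sub_leader_feedback_le hY hk)
    _ = G / (2 * γ) * ∑ k ∈ Icc 2 T, feedbackShare T τ (lastFeedback T τ (k - 1))
        + 2 * G / γ * ∑ k ∈ Icc 1 T, ∑ s ∈ Icc k (τ k), feedbackShare T τ s := by
      rw [sum_add_distrib, ← mul_sum, ← mul_sum, hsplit fun k => ∑ s ∈ Icc k (τ k), _]
      ring
    _ ≤ G / (2 * γ) * (D * H) + 2 * G / γ * (D * H) := by gcongr
    _ = 5 / 2 * D * G / γ * H := by ring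

theorem regret_le (h : IsFTDLRun X T D τ f G γ x) {z : E} (hz : z ∈ X) :
    ∑ k ∈ Icc 1 T, f k (x k) - ∑ k ∈ Icc 1 T, f k z
      ≤ 3 * D * G ^ 2 * (1 + Real.log T) / γ := by
  obtain ⟨Y, hY⟩ := h.exists_leader
  have hleader : ∑ k ∈ Icc 1 T, f k (Y (τ k)) ≤ ∑ k ∈ Icc 1 T, f k z :=
    calc ∑ k ∈ Icc 1 T, f k (Y (τ k))
        = ∑ t ∈ Icc 1 T, ∑ k ∈ feedbackAt T τ t, f k (Y t) :=
          (sum_Icc_sum_feedbackAt h.mapsTo _).symm.trans <|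
            sum_congr rfl fun t _ => sum_congr rfl fun k hk => by rw [(mem_feedbackAt.1 hk).2]
      _ ≤ ∑ t ∈ Icc 1 T, ∑ k ∈ feedbackAt T τ t, f k z :=
          sum_apply_leader_le (fun t z => ∑ k ∈ feedbackAt T τ t, f k z) Y hY hz
      _ = ∑ k ∈ Icc 1 T, f k z := sum_Icc_sum_feedbackAt h.mapsTo _
  have hlip : ∀ k ∈ Icc 1 T, f k (x k) - f k (Y (τ k)) ≤ G * ‖x k - Y (τ k)‖ := fun k hk =>
    ((h.strongConvex k hk).sub_le_norm_fderiv_mul h.pos.le (h.iterate_mem hk)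
      (hY _ (h.mapsTo k hk)).1).trans
      (mul_le_mul_of_nonneg_right (h.norm_fderiv_le k hk _ (h.iterate_mem hk)) (norm_nonneg _))
  have hH := sum_feedbackShare_le h.mapsTo h.feedbackAt_one_nonempty
  have hH₀ : 0 ≤ ∑ s ∈ Icc 1 T, feedbackShare T τ s :=
    sum_nonneg fun s _ => feedbackShare_nonneg s
  have hγ := h.pos
  have hG := h.bound_nonneg
  calc ∑ k ∈ Icc 1 T, f k (x k) - ∑ k ∈ Icc 1 T, f k z
      ≤ ∑ k ∈ Icc 1 T, (f k (x k) - f k (Y (τ k))) := by rw [sum_sub_distrib]; linarith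
    _ ≤ G * ∑ k ∈ Icc 1 T, ‖x k - Y (τ k)‖ := by rw [mul_sum]; exact sum_le_sum hlip
    _ ≤ G * (5 / 2 * D * G / γ * ∑ s ∈ Icc 1 T, feedbackShare T τ s) := by
      gcongr
      exact h.sum_norm_iterate_sub_leader_le hY
    _ = 5 / 2 * (D * G ^ 2 / γ) * ∑ s ∈ Icc 1 T, feedbackShare T τ s := by ring
    _ ≤ 3 * (D * G ^ 2 / γ) * (1 + Real.log T) := by gcongr; norm_num
    _ = 3 * D * G ^ 2 * (1 + Real.log T) / γ := by ring

end IsFTDLRun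

end Run

theorem ftdl_rsc_euclidean_regret_general
    {E : Type*} [NormedAddCommGroup E] [InnerProductSpace ℝ E]
    (X : Set E) (hX : Convex ℝ X)
    (T : ℕ) (d : ℕ → ℕ)
    (hd : ∀ t ∈ Finset.Icc 1 T, 1 ≤ d t ∧ t + d t - 1 ≤ T)
    (F : ℕ → Finset ℕ)
    (hF : ∀ t, F t = (Finset.Icc 1 T).filter (fun k => k + d k - 1 = t))
    (hF1 : (F 1).Nonempty)
    (f : ℕ → E → ℝ) (G₂ : ℝ)
    (hfdiff : ∀ t ∈ Finset.Icc 1 T, Differentiable ℝ (f t))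
    (hG : ∀ t ∈ Finset.Icc 1 T, ∀ z ∈ X, ‖fderiv ℝ (f t) z‖ ≤ G₂)
    (γ : ℝ) (hγ : 0 < γ)
    (hsc : ∀ t ∈ Finset.Icc 1 T, ∀ a ∈ X, ∀ b ∈ X,
      f t a - f t b - fderiv ℝ (f t) b (a - b) ≥ γ / 2 * ‖a - b‖ ^ 2)
    (Fb : ℕ → E → ℝ)
    (hFb : ∀ t z, Fb t z = ∑ τ ∈ Finset.Icc 1 t, ∑ k ∈ F τ, f k z)
    (x : ℕ → E) (hx1 : x 1 ∈ X)
    (hupd : ∀ t ∈ Finset.Icc 1 T, (F t).Nonempty →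
      x (t + 1) ∈ X ∧ ∃ ystar ∈ X, IsMinOn (Fb t) X ystar ∧
        Fb t (x (t + 1)) ≤ Fb t ystar
          + ((F t).card : ℝ) ^ 2 * G₂ ^ 2
            / (8 * γ * ∑ τ ∈ Finset.Icc 1 t, ((F τ).card : ℝ)))
    (hupd0 : ∀ t ∈ Finset.Icc 1 T, F t = ∅ → x (t + 1) = x t) :
    ∀ xstar ∈ X,
      ∑ t ∈ Finset.Icc 1 T, f t (x t) - ∑ t ∈ Finset.Icc 1 T, f t xstar
        ≤ 3 * (((Finset.Icc 1 T).sup d : ℕ) : ℝ) * G₂ ^ 2 * (1 + Real.log T)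
            / γ := by
  intro xstar hxstar
  set τ : ℕ → ℕ := fun k => k + d k - 1
  obtain rfl : F = feedbackAt T τ := funext hF
  obtain rfl : Fb = cumLoss T τ f := funext fun t => funext (hFb t)
  have hτ : ∀ k ∈ Icc 1 T, k ≤ τ k ∧ τ k < k + (Icc 1 T).sup d := fun k hk => by
    have := (hd k hk).1
    have := le_sup (f := d) hk
    simp only [τ, mem_Icc] at hk ⊢
    omega
  exact IsFTDLRun.regret_le
    ⟨hX, hτ, fun k hk => (hd k hk).2, hF1, hfdiff, hG, hγ, hsc, hx1, hupd, hupd0⟩ hxstar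

/-- Corollary 2 (Euclidean case): FTDL-RSC with classically `γ`-strongly convex losses
attains regret at most `3dG₂²(1 + ln T)/γ`. -/
theorem ftdl_rsc_euclidean_regret
    {E : Type*} [NormedAddCommGroup E] [InnerProductSpace ℝ E]
    (X : Set E) (hXne : X.Nonempty) (hX : Convex ℝ X)
    (T : ℕ) (hT : 1 ≤ T) (d : ℕ → ℕ)
    (hd : ∀ t ∈ Finset.Icc 1 T, 1 ≤ d t ∧ t + d t - 1 ≤ T)
    (F : ℕ → Finset ℕ)
    (hF : ∀ t, F t = (Finset.Icc 1 T).filter (fun k => k + d k - 1 = t))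
    (hF1 : (F 1).Nonempty)
    (f : ℕ → E → ℝ) (G₂ : ℝ)
    (hfdiff : ∀ t ∈ Finset.Icc 1 T, Differentiable ℝ (f t))
    (hG : ∀ t ∈ Finset.Icc 1 T, ∀ z ∈ X, ‖fderiv ℝ (f t) z‖ ≤ G₂)
    (γ : ℝ) (hγ : 0 < γ)
    (hsc : ∀ t ∈ Finset.Icc 1 T, ∀ a ∈ X, ∀ b ∈ X,
      f t a - f t b - fderiv ℝ (f t) b (a - b) ≥ γ / 2 * ‖a - b‖ ^ 2)
    (Fb : ℕ → E → ℝ)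
    (hFb : ∀ t z, Fb t z = ∑ τ ∈ Finset.Icc 1 t, ∑ k ∈ F τ, f k z)
    (x : ℕ → E) (hx1 : x 1 ∈ X)
    (hupd : ∀ t ∈ Finset.Icc 1 T, (F t).Nonempty →
      x (t + 1) ∈ X ∧ ∃ ystar ∈ X, IsMinOn (Fb t) X ystar ∧
        Fb t (x (t + 1)) ≤ Fb t ystar
          + ((F t).card : ℝ) ^ 2 * G₂ ^ 2
            / (8 * γ * ∑ τ ∈ Finset.Icc 1 t, ((F τ).card : ℝ)))
    (hupd0 : ∀ t ∈ Finset.Icc 1 T, F t = ∅ → x (t + 1) = x t) :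
    ∀ xstar ∈ X,
      ∑ t ∈ Finset.Icc 1 T, f t (x t) - ∑ t ∈ Finset.Icc 1 T, f t xstar
        ≤ 3 * (((Finset.Icc 1 T).sup d : ℕ) : ℝ) * G₂ ^ 2 * (1 + Real.log T)
            / γ :=
  ftdl_rsc_euclidean_regret_general X hX T d hd F hF hF1 f G₂ hfdiff hG γ hγ hsc Fb hFb x hx1 hupd
    hupd0
end
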